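/- arXiv:math/0403280 — 3 statements merged into one kernel-verified Lean document; each statement's English description precedes it below -/
import Mathlib

section
/- Let A = Σ{A_{ij} | i,j ∈ I} be the generalized matrix ring of a Γ_I-system. If the ring A is prime, then for all i,j ∈ I the A_{ji}-ring A_{ij} is prime: for all ideals B and C of the A_{ji}-ring A_{ij}, B·A_{ji}·C = 0 implies B = 0 or C = 0. -/
/-!
Generalized matrix rings (g.m.rings) of a `Γ_I`-system, their g.m.ideals,
g.m.homomorphisms, quotients, and the general theory of radicals,
following Zhang, "The Baer radical of generalized matrix rings".
-/

universe u v w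

set_option autoImplicit false
set_option maxHeartbeats 1000000

/-- A `Γ_I`-system: a family of additive abelian groups `A i j` (`i j : I`)
with multiplications `A i j × A j k → A i k`, additive in each variable and
associative. -/
structure GammaSystem (I : Type u) where
  A : I → I → Type v
  [inst : ∀ i j, AddCommGroup (A i j)]
  mul : ∀ {i j k : I}, A i j → A j k → A i k
  add_mul : ∀ {i j k : I} (x y : A i j) (z : A j k), mul (x + y) z = mul x z + mul y z
  mul_add : ∀ {i j k : I} (w : A i j) (x y : A j k), mul w (x + y) = mul w x + mul w y
  mul_assoc : ∀ {l i j k : I} (w : A l i) (x : A i j) (z : A j k),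
    mul w (mul x z) = mul (mul w x) z

attribute [instance] GammaSystem.inst

variable {I : Type u}

/-- The generalized matrix ring `A = Σ{A_{ij} | i,j ∈ I}` of a `Γ_I`-system:
the external direct sum `⨁_{(i,j)} A i j` (finitely supported families). -/
abbrev GMRing (S : GammaSystem I) : Type (max u v) := Π₀ p : I × I, S.A p.1 p.2

namespace GammaSystem

variable (S : GammaSystem I)

lemma zero_mul' {i j k : I} (z : S.A j k) : S.mul (0 : S.A i j) z = 0 := by
  have h := S.add_mul (0 : S.A i j) 0 z
  rw [add_zero] at h
  exact (add_eq_left.mp h.symm)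

lemma mul_zero' {i j k : I} (w : S.A i j) : S.mul w (0 : S.A j k) = 0 := by
  have h := S.mul_add w (0 : S.A j k) 0
  rw [add_zero] at h
  exact (add_eq_left.mp h.symm)

lemma neg_mul' {i j k : I} (x : S.A i j) (z : S.A j k) :
    S.mul (-x) z = -(S.mul x z) := by
  have h := S.add_mul x (-x) z
  rw [add_neg_cancel, S.zero_mul'] at h
  exact (neg_eq_of_add_eq_zero_right h.symm).symm

lemma mul_neg' {i j k : I} (w : S.A i j) (x : S.A j k) :
    S.mul w (-x) = -(S.mul w x) := by
  have h := S.mul_add w x (-x)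
  rw [add_neg_cancel, S.mul_zero'] at h
  exact (neg_eq_of_add_eq_zero_right h.symm).symm

-- Multiplication of generalized matrices: `(x*y)_{ij} = ∑_k x_{ik} y_{kj}`.
open Classical in
noncomputable def gmul (x y : GMRing S) : GMRing S :=
  x.sum fun p a => y.sum fun q b =>
    if h : p.2 = q.1 then
      DFinsupp.single (p.1, q.2)
        (S.mul a (cast (congrArg (fun t => S.A t q.2) h.symm) b))
    else 0

open Classical in
lemma gmul_inner_zero (p : I × I) (a : S.A p.1 p.2) (q : I × I) :
    (if h : p.2 = q.1 then
      DFinsupp.single (p.1, q.2)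
        (S.mul a (cast (congrArg (fun t => S.A t q.2) h.symm) (0 : S.A q.1 q.2)))
    else (0 : GMRing S)) = (0 : GMRing S) := by
  obtain ⟨p1, p2⟩ := p
  obtain ⟨q1, q2⟩ := q
  by_cases h : p2 = q1
  · subst h
    simp [S.mul_zero']
  · simp [h]

open Classical in
lemma gmul_inner_add (p : I × I) (a : S.A p.1 p.2) (q : I × I) (b₁ b₂ : S.A q.1 q.2) :
    (if h : p.2 = q.1 then
      DFinsupp.single (p.1, q.2)
        (S.mul a (cast (congrArg (fun t => S.A t q.2) h.symm) (b₁ + b₂)))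
    else (0 : GMRing S)) =
    (if h : p.2 = q.1 then
      DFinsupp.single (p.1, q.2)
        (S.mul a (cast (congrArg (fun t => S.A t q.2) h.symm) b₁))
    else (0 : GMRing S)) +
    (if h : p.2 = q.1 then
      DFinsupp.single (p.1, q.2)
        (S.mul a (cast (congrArg (fun t => S.A t q.2) h.symm) b₂))
    else (0 : GMRing S)) := by
  obtain ⟨p1, p2⟩ := p
  obtain ⟨q1, q2⟩ := q
  by_cases h : p2 = q1
  · subst h
    simp [S.mul_add, DFinsupp.single_add]
  · simp [h]

open Classical in
lemma gmul_add (x y z : GMRing S) : S.gmul x (y + z) = S.gmul x y + S.gmul x z := by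
  unfold gmul
  have : ∀ (p : I × I) (a : S.A p.1 p.2),
      (y + z).sum (fun q b =>
        if h : p.2 = q.1 then
          DFinsupp.single (p.1, q.2)
            (S.mul a (cast (congrArg (fun t => S.A t q.2) h.symm) b))
        else (0 : GMRing S)) =
      y.sum (fun q b =>
        if h : p.2 = q.1 then
          DFinsupp.single (p.1, q.2)
            (S.mul a (cast (congrArg (fun t => S.A t q.2) h.symm) b))
        else (0 : GMRing S)) +
      z.sum (fun q b =>
        if h : p.2 = q.1 then
          DFinsupp.single (p.1, q.2)
            (S.mul a (cast (congrArg (fun t => S.A t q.2) h.symm) b))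
        else (0 : GMRing S)) := by
    intro p a
    exact DFinsupp.sum_add_index (fun q => S.gmul_inner_zero p a q)
      (fun q b₁ b₂ => S.gmul_inner_add p a q b₁ b₂)
  calc x.sum (fun p a => (y + z).sum fun q b =>
        if h : p.2 = q.1 then
          DFinsupp.single (p.1, q.2)
            (S.mul a (cast (congrArg (fun t => S.A t q.2) h.symm) b))
        else (0 : GMRing S))
      = x.sum (fun p a =>
          (y.sum fun q b =>
            if h : p.2 = q.1 then
              DFinsupp.single (p.1, q.2)
                (S.mul a (cast (congrArg (fun t => S.A t q.2) h.symm) b))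
            else (0 : GMRing S)) +
          (z.sum fun q b =>
            if h : p.2 = q.1 then
              DFinsupp.single (p.1, q.2)
                (S.mul a (cast (congrArg (fun t => S.A t q.2) h.symm) b))
            else (0 : GMRing S))) := by
        exact congrArg (DFinsupp.sum x) (funext fun p => funext fun a => this p a)
    _ = _ := DFinsupp.sum_add

open Classical in
lemma add_gmul (x y z : GMRing S) : S.gmul (x + y) z = S.gmul x z + S.gmul y z := by
  unfold gmul
  refine DFinsupp.sum_add_index (fun p => ?_) (fun p a₁ a₂ => ?_)
  · have : (fun (q : I × I) (b : S.A q.1 q.2) =>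
        (if h : p.2 = q.1 then
          DFinsupp.single (p.1, q.2)
            (S.mul (0 : S.A p.1 p.2) (cast (congrArg (fun t => S.A t q.2) h.symm) b))
        else (0 : GMRing S))) = fun q b => (0 : GMRing S) := by
      funext q b
      obtain ⟨p1, p2⟩ := p
      obtain ⟨q1, q2⟩ := q
      by_cases h : p2 = q1
      · subst h; simp [S.zero_mul']
      · simp [h]
    rw [congrArg (DFinsupp.sum z) this, DFinsupp.sum_zero]
  · have : (fun (q : I × I) (b : S.A q.1 q.2) =>
        (if h : p.2 = q.1 then
          DFinsupp.single (p.1, q.2)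
            (S.mul (a₁ + a₂) (cast (congrArg (fun t => S.A t q.2) h.symm) b))
        else (0 : GMRing S))) = fun q b =>
        (if h : p.2 = q.1 then
          DFinsupp.single (p.1, q.2)
            (S.mul a₁ (cast (congrArg (fun t => S.A t q.2) h.symm) b))
        else (0 : GMRing S)) +
        (if h : p.2 = q.1 then
          DFinsupp.single (p.1, q.2)
            (S.mul a₂ (cast (congrArg (fun t => S.A t q.2) h.symm) b))
        else (0 : GMRing S)) := by
      funext q b
      obtain ⟨p1, p2⟩ := p
      obtain ⟨q1, q2⟩ := q
      by_cases h : p2 = q1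
      · subst h; simp [S.add_mul, DFinsupp.single_add]
      · simp [h]
    rw [congrArg (DFinsupp.sum z) this, DFinsupp.sum_add]

open Classical in
lemma zero_gmul (y : GMRing S) : S.gmul 0 y = 0 := by
  unfold gmul
  exact DFinsupp.sum_zero_index

open Classical in
lemma gmul_zero (x : GMRing S) : S.gmul x 0 = 0 := by
  unfold gmul
  have : (fun (p : I × I) (a : S.A p.1 p.2) =>
      DFinsupp.sum (0 : GMRing S) (fun q b =>
        if h : p.2 = q.1 then
          DFinsupp.single (p.1, q.2)
            (S.mul a (cast (congrArg (fun t => S.A t q.2) h.symm) b))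
        else (0 : GMRing S))) = fun p a => (0 : GMRing S) := by
    funext p a
    exact DFinsupp.sum_zero_index
  rw [congrArg (DFinsupp.sum x) this, DFinsupp.sum_zero]

open Classical in
lemma gmul_single (p : I × I) (a : S.A p.1 p.2) (y : GMRing S) :
    S.gmul (DFinsupp.single p a) y =
      y.sum fun q b =>
        if h : p.2 = q.1 then
          DFinsupp.single (p.1, q.2)
            (S.mul a (cast (congrArg (fun t => S.A t q.2) h.symm) b))
        else 0 := by
  unfold gmul
  refine DFinsupp.sum_single_index ?_
  have : (fun (q : I × I) (b : S.A q.1 q.2) =>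
      (if h : p.2 = q.1 then
        DFinsupp.single (p.1, q.2)
          (S.mul (0 : S.A p.1 p.2) (cast (congrArg (fun t => S.A t q.2) h.symm) b))
      else (0 : GMRing S))) = fun q b => (0 : GMRing S) := by
    funext q b
    obtain ⟨p1, p2⟩ := p; obtain ⟨q1, q2⟩ := q
    by_cases h : p2 = q1
    · subst h; simp [S.zero_mul']
    · simp [h]
  rw [congrArg (DFinsupp.sum y) this, DFinsupp.sum_zero]

open Classical in
lemma gmul_single_single (p q : I × I) (a : S.A p.1 p.2) (b : S.A q.1 q.2) :
    S.gmul (DFinsupp.single p a) (DFinsupp.single q b) =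
      if h : p.2 = q.1 then
        DFinsupp.single (p.1, q.2)
          (S.mul a (cast (congrArg (fun t => S.A t q.2) h.symm) b))
      else 0 := by
  rw [S.gmul_single]
  exact DFinsupp.sum_single_index (S.gmul_inner_zero p a q)

open Classical in
lemma gmul_single_assoc (p q r : I × I) (a : S.A p.1 p.2) (b : S.A q.1 q.2)
    (c : S.A r.1 r.2) :
    S.gmul (S.gmul (DFinsupp.single p a) (DFinsupp.single q b)) (DFinsupp.single r c) =
    S.gmul (DFinsupp.single p a) (S.gmul (DFinsupp.single q b) (DFinsupp.single r c)) := by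
  obtain ⟨p1, p2⟩ := p; obtain ⟨q1, q2⟩ := q; obtain ⟨r1, r2⟩ := r
  by_cases h1 : p2 = q1
  · subst h1
    by_cases h2 : q2 = r1
    · subst h2
      rw [S.gmul_single_single (p1, p2) (p2, q2) a b, dif_pos rfl,
        S.gmul_single_single (p2, q2) (q2, r2) b c, dif_pos rfl,
        S.gmul_single_single (p1, q2) (q2, r2) _ c, dif_pos rfl,
        S.gmul_single_single (p1, p2) (p2, r2) a _, dif_pos rfl]
      show DFinsupp.single (p1, r2) _ = DFinsupp.single (p1, r2) _
      rw [show (cast (congrArg (fun t => S.A t q2) (Eq.symm rfl)) b) = b from rfl,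
        show (cast (congrArg (fun t => S.A t r2) (Eq.symm rfl)) c) = c from rfl]
      exact congrArg _ (S.mul_assoc a b c).symm
    · rw [S.gmul_single_single (p1, p2) (p2, q2) a b, dif_pos rfl,
        S.gmul_single_single (p2, q2) (r1, r2) b c, dif_neg h2,
        S.gmul_single_single (p1, q2) (r1, r2) _ c, dif_neg h2, S.gmul_zero]
  · by_cases h2 : q2 = r1
    · subst h2
      rw [S.gmul_single_single (p1, p2) (q1, q2) a b, dif_neg h1,
        S.gmul_single_single (q1, q2) (q2, r2) b c, dif_pos rfl,
        S.gmul_single_single (p1, p2) (q1, r2) a _, dif_neg h1, S.zero_gmul]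
    · rw [S.gmul_single_single (p1, p2) (q1, q2) a b, dif_neg h1,
        S.gmul_single_single (q1, q2) (r1, r2) b c, dif_neg h2,
        S.zero_gmul, S.gmul_zero]

open Classical in
lemma gmul_single_single_assoc' (p q : I × I) (a : S.A p.1 p.2) (b : S.A q.1 q.2)
    (z : GMRing S) :
    S.gmul (S.gmul (DFinsupp.single p a) (DFinsupp.single q b)) z =
    S.gmul (DFinsupp.single p a) (S.gmul (DFinsupp.single q b) z) := by
  induction z using DFinsupp.induction with
  | h0 => simp only [S.gmul_zero, S.zero_gmul]
  | ha r c f hf hc ih =>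
      rw [S.gmul_add, S.gmul_add, S.gmul_add, ih, S.gmul_single_assoc]

open Classical in
lemma gmul_single_assoc'' (p : I × I) (a : S.A p.1 p.2) (y z : GMRing S) :
    S.gmul (S.gmul (DFinsupp.single p a) y) z =
    S.gmul (DFinsupp.single p a) (S.gmul y z) := by
  induction y using DFinsupp.induction with
  | h0 => simp only [S.gmul_zero, S.zero_gmul]
  | ha q b f hf hb ih =>
      rw [S.gmul_add, S.add_gmul, S.add_gmul, S.gmul_add, ih,
        S.gmul_single_single_assoc']

open Classical in
lemma gmul_assoc (x y z : GMRing S) :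
    S.gmul (S.gmul x y) z = S.gmul x (S.gmul y z) := by
  induction x using DFinsupp.induction with
  | h0 => simp only [S.gmul_zero, S.zero_gmul]
  | ha p a f hf ha ih =>
      rw [S.add_gmul, S.add_gmul, S.add_gmul, ih, S.gmul_single_assoc'']

noncomputable instance : NonUnitalNonAssocRing (GMRing S) :=
  { (inferInstance : AddCommGroup (GMRing S)) with
    mul := S.gmul
    left_distrib := S.gmul_add
    right_distrib := fun x y z => S.add_gmul x y z
    zero_mul := S.zero_gmul
    mul_zero := S.gmul_zero }

/-- The generalized matrix ring is a (possibly non-unital) associative ring. -/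
noncomputable instance : NonUnitalRing (GMRing S) :=
  { (inferInstance : NonUnitalNonAssocRing (GMRing S)) with
    mul_assoc := S.gmul_assoc }

/-- A `Γ_I`-system (g.m.ring) is zero if all its components are zero. -/
def IsZero : Prop := ∀ (i j : I) (x : S.A i j), x = 0

/-- `x ∈ A_{ij}` is `m`-nilpotent in the `A_{ji}`-ring `A_{ij}`: every
`m`-sequence `a_{n+1} = a_n u_n a_n` (`u_n ∈ A_{ji}`) with `a_1 = x`
satisfies `a_k = 0` for some `k`. -/
def MNilpotent (i j : I) (x : S.A i j) : Prop :=
  ∀ a : ℕ → S.A i j, a 0 = x →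
    (∀ n, ∃ u : S.A j i, a (n + 1) = S.mul (S.mul (a n) u) (a n)) →
    ∃ k, a k = 0

/-- The Baer radical `r_b(A_{ij})` of the `A_{ji}`-ring `A_{ij}`: the set of
its `m`-nilpotent elements. -/
def componentBaer (i j : I) : Set (S.A i j) := { x | S.MNilpotent i j x }

end GammaSystem

section RingNotions

variable (R : Type w) [NonUnitalRing R]

/-- A two-sided ideal `P` of a (possibly non-unital) ring is prime if
`BC ⊆ P` implies `B ⊆ P` or `C ⊆ P`. -/
def TwoSidedIdeal.IsPrimeIdeal {R : Type w} [NonUnitalRing R]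
    (P : TwoSidedIdeal R) : Prop :=
  ∀ B C : TwoSidedIdeal R, (∀ b ∈ B, ∀ c ∈ C, b * c ∈ P) → B ≤ P ∨ C ≤ P

/-- The Baer radical of a (possibly non-unital) ring: the intersection of all
prime two-sided ideals. -/
def baerRadical : Set R := { x | ∀ P : TwoSidedIdeal R, P.IsPrimeIdeal → x ∈ P }

/-- `x` is an `m`-nilpotent element of the ring `R`: every `m`-sequence
`a_{n+1} = a_n u_n a_n` (`u_n ∈ R`) with `a_1 = x` reaches `0`. -/
def IsMNilpotent {R : Type w} [NonUnitalRing R] (x : R) : Prop :=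
  ∀ a : ℕ → R, a 0 = x → (∀ n, ∃ u : R, a (n + 1) = a n * u * a n) → ∃ k, a k = 0

/-- `x` is `m`-nilpotent in the subring given by the subset `T` of `R`:
every `m`-sequence lying in `T`, with multipliers `u_n ∈ T`, starting at `x`,
reaches `0`. -/
def IsMNilpotentIn {R : Type w} [NonUnitalRing R] (T : Set R) (x : R) : Prop :=
  ∀ a : ℕ → R, (∀ n, a n ∈ T) → a 0 = x →
    (∀ n, ∃ u ∈ T, a (n + 1) = a n * u * a n) → ∃ k, a k = 0

/-- A ring is prime if `BC = 0` implies `B = 0` or `C = 0` for all two-sided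
ideals `B, C`. -/
def IsPrimeRing : Prop :=
  ∀ B C : TwoSidedIdeal R, (∀ b ∈ B, ∀ c ∈ C, b * c = 0) → B = ⊥ ∨ C = ⊥

/-- A ring is semiprime if `B·B = 0` implies `B = 0` for every two-sided
ideal `B`. -/
def IsSemiprimeRing : Prop :=
  ∀ B : TwoSidedIdeal R, (∀ x ∈ B, ∀ y ∈ B, x * y = 0) → B = ⊥

/-- The annihilator `B* = {x ∈ R | xB = Bx = 0}` of a two-sided ideal. -/
def TwoSidedIdeal.annihilator {R : Type w} [NonUnitalRing R]
    (B : TwoSidedIdeal R) : TwoSidedIdeal R :=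
  TwoSidedIdeal.mk' { x | ∀ b ∈ B, x * b = 0 ∧ b * x = 0 }
    (fun b hb => ⟨zero_mul b, mul_zero b⟩)
    (fun {x y} hx hy b hb =>
      ⟨by rw [add_mul, (hx b hb).1, (hy b hb).1, add_zero],
       by rw [mul_add, (hx b hb).2, (hy b hb).2, add_zero]⟩)
    (fun {x} hx b hb =>
      ⟨by rw [neg_mul, (hx b hb).1, neg_zero],
       by rw [mul_neg, (hx b hb).2, neg_zero]⟩)
    (fun {x y} hy b hb => by
      refine ⟨?_, ?_⟩
      · rw [mul_assoc, (hy b hb).1, mul_zero]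
      · rw [← mul_assoc]
        exact (hy (b * x) (B.mul_mem_right b x hb)).2)
    (fun {x y} hx b hb => by
      refine ⟨?_, ?_⟩
      · rw [mul_assoc]
        exact (hx (y * b) (B.mul_mem_left y b hb)).1
      · rw [← mul_assoc, (hx b hb).2, zero_mul])

end RingNotions

/-- A g.m.ideal of the g.m.ring of `S`: a family of additive subgroups
`B i j ≤ A i j` with `B_{ij} A_{jk} ⊆ B_{ik}` and `A_{ij} B_{jk} ⊆ B_{ik}`. -/
structure GMIdeal (S : GammaSystem I) where
  B : ∀ i j : I, AddSubgroup (S.A i j)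
  mul_mem_right : ∀ {i j k : I} (x : S.A i j) (z : S.A j k), x ∈ B i j → S.mul x z ∈ B i k
  mul_mem_left : ∀ {i j k : I} (x : S.A i j) (z : S.A j k), z ∈ B j k → S.mul x z ∈ B i k

namespace GMIdeal

variable {S : GammaSystem I} (N : GMIdeal S)

/-- The subset of the g.m.ring consisting of the generalized matrices all of
whose components lie in the g.m.ideal `N`. -/
def carrier : Set (GMRing S) := { x | ∀ p : I × I, x p ∈ N.B p.1 p.2 }

/-- A g.m.ideal is zero if all its components are the zero subgroup. -/
def IsZero : Prop := ∀ i j : I, N.B i j = ⊥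

/-- A g.m.ideal regarded as a g.m.ring (a `Γ_I`-system) in its own right. -/
def toSystem : GammaSystem I where
  A i j := N.B i j
  inst i j := inferInstance
  mul {i j k} x z := ⟨S.mul x.1 z.1, N.mul_mem_right x.1 z.1 x.2⟩
  add_mul x y z := Subtype.ext (S.add_mul x.1 y.1 z.1)
  mul_add w x y := Subtype.ext (S.mul_add w.1 x.1 y.1)
  mul_assoc w x z := Subtype.ext (S.mul_assoc w.1 x.1 z.1)

/-- The quotient g.m.ring `A//B`, with components `A_{ij}/B_{ij}`. -/
def quotSystem : GammaSystem I where
  A i j := S.A i j ⧸ N.B i j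
  inst i j := inferInstance
  mul {i j k} x z :=
    Quotient.liftOn₂' x z
      (fun a b => ((S.mul a b : S.A i k) : S.A i k ⧸ N.B i k))
      (by
        intro a₁ a₂ b₁ b₂ h₁ h₂
        replace h₁ := (QuotientAddGroup.leftRel_apply).mp h₁
        replace h₂ := (QuotientAddGroup.leftRel_apply).mp h₂
        refine (QuotientAddGroup.eq).mpr ?_
        have : -(S.mul a₁ a₂) + S.mul b₁ b₂ =
            S.mul (-a₁ + b₁) a₂ + S.mul b₁ (-a₂ + b₂) := by
          rw [S.add_mul, S.mul_add, S.neg_mul', S.mul_neg']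
          abel
        rw [this]
        exact add_mem (N.mul_mem_right _ _ h₁) (N.mul_mem_left _ _ h₂))
  add_mul {i j k} x y z := by
    refine Quotient.inductionOn₃' x y z ?_
    intro a b c
    show ((S.mul (a + b) c : S.A i k) : S.A i k ⧸ N.B i k) = _
    rw [S.add_mul]
    rfl
  mul_add {i j k} w x y := by
    refine Quotient.inductionOn₃' w x y ?_
    intro a b c
    show ((S.mul a (b + c) : S.A i k) : S.A i k ⧸ N.B i k) = _
    rw [S.mul_add]
    rfl
  mul_assoc {l i j k} w x z := by
    refine Quotient.inductionOn₃' w x z ?_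
    intro a b c
    show ((S.mul a (S.mul b c) : S.A l k) : S.A l k ⧸ N.B l k) = _
    rw [S.mul_assoc]
    rfl

/-- The annihilator g.m.ideal `B* = {x ∈ A | xB = Bx = 0}` of a g.m.ideal. -/
def ann : GMIdeal S where
  B i j :=
    { carrier := { x | (∀ (k : I) (b : S.A j k), b ∈ N.B j k → S.mul x b = 0) ∧
        (∀ (k : I) (b : S.A k i), b ∈ N.B k i → S.mul b x = 0) }
      add_mem' := by
        rintro x y ⟨hx₁, hx₂⟩ ⟨hy₁, hy₂⟩
        refine ⟨fun k b hb => ?_, fun k b hb => ?_⟩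
        · rw [S.add_mul, hx₁ k b hb, hy₁ k b hb, add_zero]
        · rw [S.mul_add, hx₂ k b hb, hy₂ k b hb, add_zero]
      zero_mem' := ⟨fun k b _ => S.zero_mul' b, fun k b _ => S.mul_zero' b⟩
      neg_mem' := by
        rintro x ⟨hx₁, hx₂⟩
        refine ⟨fun k b hb => ?_, fun k b hb => ?_⟩
        · rw [S.neg_mul', hx₁ k b hb, neg_zero]
        · rw [S.mul_neg', hx₂ k b hb, neg_zero] }
  mul_mem_right := by
    rintro i j k x z ⟨hx₁, hx₂⟩
    refine ⟨fun m b hb => ?_, fun m b hb => ?_⟩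
    · rw [← S.mul_assoc]
      exact hx₁ m (S.mul z b) (N.mul_mem_left z b hb)
    · rw [S.mul_assoc, hx₂ m b hb, S.zero_mul']
  mul_mem_left := by
    rintro i j k x z ⟨hz₁, hz₂⟩
    refine ⟨fun m b hb => ?_, fun m b hb => ?_⟩
    · rw [← S.mul_assoc, hz₁ m b hb, S.mul_zero']
    · rw [S.mul_assoc]
      exact hz₂ m (S.mul b x) (N.mul_mem_right b x hb)

/-- `N` is a "Baer radical" g.m.ideal: every element of the ring `N` is
`m`-nilpotent in the ring `N`. -/
def IsBaerGMIdeal : Prop := ∀ x ∈ N.carrier, IsMNilpotentIn N.carrier x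

end GMIdeal

/-- A g.m.homomorphism between two g.m.rings over the same index set. -/
structure GMHom (S T : GammaSystem I) where
  f : ∀ i j : I, S.A i j → T.A i j
  map_add : ∀ {i j : I} (x y : S.A i j), f i j (x + y) = f i j x + f i j y
  map_mul : ∀ {i j k : I} (x : S.A i j) (z : S.A j k),
    f i k (S.mul x z) = T.mul (f i j x) (f j k z)

/-- A g.m.homomorphism is surjective if each component map is onto. -/
def GMHom.Surjective {S T : GammaSystem I} (ψ : GMHom S T) : Prop :=
  ∀ i j : I, Function.Surjective (ψ.f i j)

/-- The componentwise intersection `\bar r_b(A)` of all g.m.ideals `B` of `A`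
such that the quotient ring `A//B` is a prime ring. -/
def gmBarBaer (S : GammaSystem I) : Set (GMRing S) :=
  { x | ∀ B : GMIdeal S, IsPrimeRing (GMRing B.quotSystem) →
      ∀ p : I × I, x p ∈ B.B p.1 p.2 }

section RadicalTheory

/-- `N` is the largest g.m.ideal of `S` belonging (as a g.m.ring) to the
class `r`. -/
def IsLargestRadicalIdeal (r : ∀ I₀ : Type u, GammaSystem.{u, v} I₀ → Prop)
    {I : Type u} (S : GammaSystem I) (N : GMIdeal S) : Prop :=
  r I N.toSystem ∧ ∀ M : GMIdeal S, r I M.toSystem → ∀ i j : I, M.B i j ≤ N.B i j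

/-- `r` is a radical property of g.m.rings: (R1) closure under surjective
g.m.homomorphic images; (R2) every g.m.ring has a largest `r`-g.m.ideal `r(A)`;
(R3) `A//r(A)` has no non-zero `r`-g.m.ideal. -/
def IsGMRadicalProperty (r : ∀ I₀ : Type u, GammaSystem.{u, v} I₀ → Prop) : Prop :=
  (∀ (I₀ : Type u) (S T : GammaSystem I₀) (ψ : GMHom S T),
      ψ.Surjective → r I₀ S → r I₀ T) ∧
  (∀ (I₀ : Type u) (S : GammaSystem I₀), ∃ N : GMIdeal S,
      IsLargestRadicalIdeal r S N ∧
      ∀ P : GMIdeal N.quotSystem, r I₀ P.toSystem → P.IsZero)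

/-- `S` is `r`-semisimple: `r(S) = 0`, i.e. every `r`-g.m.ideal of `S` is zero. -/
def GMSemisimple (r : ∀ I₀ : Type u, GammaSystem.{u, v} I₀ → Prop)
    {I : Type u} (S : GammaSystem I) : Prop :=
  ∀ N : GMIdeal S, r I N.toSystem → N.IsZero

/-- `S` can be g.m.homomorphically mapped onto a non-zero member of the
class `K`. -/
def MapsOntoNonzeroMember (K : ∀ I₀ : Type u, GammaSystem.{u, v} I₀ → Prop)
    {I : Type u} (S : GammaSystem I) : Prop :=
  ∃ (T : GammaSystem.{u, v} I) (ψ : GMHom S T),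
    ψ.Surjective ∧ ¬ T.IsZero ∧ K I T

/-- Condition (Q1): every non-zero g.m.ideal of any member of `K` can be
g.m.homomorphically mapped onto a non-zero member of `K`. -/
def Q1Cond (K : ∀ I₀ : Type u, GammaSystem.{u, v} I₀ → Prop) : Prop :=
  ∀ (I₀ : Type u) (S : GammaSystem I₀), K I₀ S →
    ∀ N : GMIdeal S, ¬ N.IsZero → MapsOntoNonzeroMember K N.toSystem

/-- Condition (Q2): if every non-zero g.m.ideal of `A` can be
g.m.homomorphically mapped onto a non-zero member of `K`, then `A ∈ K`. -/
def Q2Cond (K : ∀ I₀ : Type u, GammaSystem.{u, v} I₀ → Prop) : Prop :=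
  ∀ (I₀ : Type u) (S : GammaSystem I₀),
    (∀ N : GMIdeal S, ¬ N.IsZero → MapsOntoNonzeroMember K N.toSystem) → K I₀ S

/-- The radical class of the upper radical `r^K` determined by `K`: the
g.m.rings which cannot be g.m.homomorphically mapped onto a non-zero member
of `K`. -/
def UpperRadicalClass (K : ∀ I₀ : Type u, GammaSystem.{u, v} I₀ → Prop)
    (I : Type u) (S : GammaSystem I) : Prop :=
  ¬ MapsOntoNonzeroMember K S

/-- A g.m.weakly special class: (WS1) every member is a semiprime ring;
(WS2) g.m.ideals of members are members; (WS3) if a g.m.ideal `B` of `A`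
is in the class, then `A//B*` is in the class. -/
def IsGMWeaklySpecial (K : ∀ I₀ : Type u, GammaSystem.{u, v} I₀ → Prop) : Prop :=
  (∀ (I₀ : Type u) (S : GammaSystem I₀), K I₀ S → IsSemiprimeRing (GMRing S)) ∧
  (∀ (I₀ : Type u) (S : GammaSystem I₀) (B : GMIdeal S), K I₀ S → K I₀ B.toSystem) ∧
  (∀ (I₀ : Type u) (S : GammaSystem I₀) (B : GMIdeal S),
      K I₀ B.toSystem → K I₀ B.ann.quotSystem)

/-- A g.m.special class: (S1) every member is a prime ring;
(S2) g.m.ideals of members are members; (S3) if a g.m.ideal `B` of `A`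
is in the class, then `A//B*` is in the class. -/
def IsGMSpecial (K : ∀ I₀ : Type u, GammaSystem.{u, v} I₀ → Prop) : Prop :=
  (∀ (I₀ : Type u) (S : GammaSystem I₀), K I₀ S → IsPrimeRing (GMRing S)) ∧
  (∀ (I₀ : Type u) (S : GammaSystem I₀) (B : GMIdeal S), K I₀ S → K I₀ B.toSystem) ∧
  (∀ (I₀ : Type u) (S : GammaSystem I₀) (B : GMIdeal S),
      K I₀ B.toSystem → K I₀ B.ann.quotSystem)

end RadicalTheory

section RingClasses

/-- A weakly special class of (possibly non-unital) rings: members are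
semiprime, two-sided ideals of members are members (as rings), and if a
two-sided ideal `B` of `A` is a member then `A/B*` is a member. -/
def IsWeaklySpecialRingClass (K : ∀ (R : Type w) [NonUnitalRing R], Prop) : Prop :=
  (∀ (R : Type w) [NonUnitalRing R], K R → IsSemiprimeRing R) ∧
  (∀ (R : Type w) [NonUnitalRing R] (B : TwoSidedIdeal R), K R → K B) ∧
  (∀ (R : Type w) [NonUnitalRing R] (B : TwoSidedIdeal R),
      K B → K B.annihilator.ringCon.Quotient)

/-- A special class of rings: a weakly special class all of whose members are
prime rings. -/
def IsSpecialRingClass (K : ∀ (R : Type w) [NonUnitalRing R], Prop) : Prop :=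
  (∀ (R : Type w) [NonUnitalRing R], K R → IsPrimeRing R) ∧
  (∀ (R : Type w) [NonUnitalRing R] (B : TwoSidedIdeal R), K R → K B) ∧
  (∀ (R : Type w) [NonUnitalRing R] (B : TwoSidedIdeal R),
      K B → K B.annihilator.ringCon.Quotient)

/-- The (upper) radical of the ring `R` determined by a class `K` of rings:
the intersection of all two-sided ideals `B` with `R/B ∈ K`. -/
def ringRadical (K : ∀ (R : Type w) [NonUnitalRing R], Prop)
    (R : Type w) [NonUnitalRing R] : Set R :=
  { x | ∀ B : TwoSidedIdeal R, K B.ringCon.Quotient → x ∈ B }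

/-- A radical property of rings: closure under surjective homomorphic images,
existence of a largest `r`-ideal, and `r`-semisimplicity of the quotient by it. -/
def IsRingRadicalProperty (K : ∀ (R : Type w) [NonUnitalRing R], Prop) : Prop :=
  (∀ (R S : Type w) [NonUnitalRing R] [NonUnitalRing S] (f : R →ₙ+* S),
      Function.Surjective f → K R → K S) ∧
  (∀ (R : Type w) [NonUnitalRing R], ∃ B : TwoSidedIdeal R,
      K B ∧ (∀ C : TwoSidedIdeal R, K C → C ≤ B) ∧
      ∀ D : TwoSidedIdeal B.ringCon.Quotient, K D → D = ⊥)

end RingClasses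

/-- An ideal of the `A_{ts}`-ring `A_{st}` (a `Γ`-ring with `M = A_{st}`,
`Γ = A_{ts}`): an additive subgroup `B` with `B·A_{ts}·A_{st} ⊆ B` and
`A_{st}·A_{ts}·B ⊆ B`. -/
structure GammaIdeal (S : GammaSystem I) (s t : I) where
  carrier : AddSubgroup (S.A s t)
  mul_mem_right : ∀ b ∈ carrier, ∀ (u : S.A t s) (y : S.A s t),
    S.mul (S.mul b u) y ∈ carrier
  mul_mem_left : ∀ (x : S.A s t) (u : S.A t s), ∀ b ∈ carrier,
    S.mul (S.mul x u) b ∈ carrier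


/-!
For `b, c ∈ A_{ij}` let `e_b, e_c` be the generalized matrices with the single entry `b`, resp.
`c`, at `(i, j)`. For every `z ∈ A` the product `e_b z e_c` is the single entry `b z_{ji} c`, so
`B·A_{ji}·C = 0` gives `e_b A e_c = 0`, and in a prime ring this forces `e_b = 0` or `e_c = 0`.
-/

namespace TwoSidedIdeal

variable {R : Type w} [NonUnitalRing R]

def leftAnnihilator (T : Set R) (hT : ∀ r, ∀ t ∈ T, r * t ∈ T) : TwoSidedIdeal R :=
  mk' {b | ∀ t ∈ T, b * t = 0}
    (fun t _ => zero_mul t)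
    (fun hb hb' t ht => by rw [add_mul, hb t ht, hb' t ht, add_zero])
    (fun hb t ht => by rw [neg_mul, hb t ht, neg_zero])
    (fun hb t ht => by rw [mul_assoc, hb t ht, mul_zero])
    (fun {_ r} hb t ht => by rw [mul_assoc, hb _ (hT r t ht)])

lemma mem_leftAnnihilator {T : Set R} {hT : ∀ r, ∀ t ∈ T, r * t ∈ T} {b : R} :
    b ∈ leftAnnihilator T hT ↔ ∀ t ∈ T, b * t = 0 :=
  mem_mk' ..

def rightAnnihilator (T : Set R) (hT : ∀ t ∈ T, ∀ r, t * r ∈ T) : TwoSidedIdeal R :=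
  mk' {c | ∀ t ∈ T, t * c = 0}
    (fun t _ => mul_zero t)
    (fun hc hc' t ht => by rw [mul_add, hc t ht, hc' t ht, add_zero])
    (fun hc t ht => by rw [mul_neg, hc t ht, neg_zero])
    (fun {r _} hc t ht => by rw [← mul_assoc, hc _ (hT t ht r)])
    (fun hc t ht => by rw [← mul_assoc, hc t ht, zero_mul])

lemma mem_rightAnnihilator {T : Set R} {hT : ∀ t ∈ T, ∀ r, t * r ∈ T} {c : R} :
    c ∈ rightAnnihilator T hT ↔ ∀ t ∈ T, t * c = 0 :=
  mem_mk' ..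

end TwoSidedIdeal

namespace IsPrimeRing

open TwoSidedIdeal

variable {R : Type w} [NonUnitalRing R]

lemma eq_zero_of_forall_mul_eq_zero (hR : IsPrimeRing R) {x : R} (hx : ∀ z, x * z = 0) :
    x = 0 := by
  set N := leftAnnihilator (Set.univ : Set R) fun _ _ _ => trivial
  have hxN : x ∈ N := mem_leftAnnihilator.mpr fun z _ => hx z
  rcases hR N N fun b hb c _ => mem_leftAnnihilator.mp hb c trivial with hN | hN <;>
    rwa [hN, mem_bot] at hxN

/-- Without a unit `x` need not lie in the ideal `K` below, so primeness applied to `K · L = 0`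
only gives `x R = 0`, from which `x = 0` is recovered by `eq_zero_of_forall_mul_eq_zero`. -/
lemma eq_zero_or_eq_zero_of_forall_mul_mul_eq_zero (hR : IsPrimeRing R) {x y : R}
    (h : ∀ z, x * z * y = 0) : x = 0 ∨ y = 0 := by
  set L := rightAnnihilator (Set.range (x * ·)) fun _ ⟨z, hz⟩ r => ⟨z * r, by
    subst hz; exact (mul_assoc x z r).symm⟩
  set K := leftAnnihilator (L : Set R) fun r _ hc => L.mul_mem_left r _ hc
  have hyL : y ∈ L := mem_rightAnnihilator.mpr fun _ ⟨z, hz⟩ => hz ▸ h z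
  rcases hR K L fun b hb c hc => mem_leftAnnihilator.mp hb c hc with hK | hL
  · refine Or.inl (hR.eq_zero_of_forall_mul_eq_zero fun z => ?_)
    have hxzK : x * z ∈ K :=
      mem_leftAnnihilator.mpr fun _ hc => mem_rightAnnihilator.mp hc _ ⟨z, rfl⟩
    rwa [hK, mem_bot] at hxzK
  · exact Or.inr (by rwa [hL, mem_bot] at hyL)

end IsPrimeRing

namespace GammaSystem

variable (S : GammaSystem I)

open Classical in
lemma single_mul_single {i j k : I} (a : S.A i j) (b : S.A j k) :
    (DFinsupp.single (i, j) a * DFinsupp.single (j, k) b : GMRing S) =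
      DFinsupp.single (i, k) (S.mul a b) :=
  (S.gmul_single_single (i, j) (j, k) a b).trans (dif_pos rfl)

open Classical in
lemma single_mul_single_of_ne {i j k l : I} (a : S.A i j) (b : S.A k l) (h : j ≠ k) :
    (DFinsupp.single (i, j) a * DFinsupp.single (k, l) b : GMRing S) = 0 :=
  (S.gmul_single_single (i, j) (k, l) a b).trans (dif_neg h)

open Classical in
lemma single_mul_mul_single {i j k l : I} (b : S.A i j) (z : GMRing S) (c : S.A k l) :
    DFinsupp.single (i, j) b * z * DFinsupp.single (k, l) c =
      DFinsupp.single (i, l) (S.mul (S.mul b (z (j, k))) c) := by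
  induction z using DFinsupp.induction with
  | h0 => rw [mul_zero, zero_mul, DFinsupp.zero_apply, S.mul_zero', S.zero_mul',
      DFinsupp.single_zero]
  | ha q a f _ _ ih =>
    rw [_root_.mul_add, _root_.add_mul, ih, DFinsupp.add_apply, S.mul_add, S.add_mul,
      DFinsupp.single_add]
    congr 1
    obtain ⟨q₁, q₂⟩ := q
    by_cases hj : j = q₁
    · subst hj
      rw [S.single_mul_single]
      by_cases hk : q₂ = k
      · subst hk
        rw [S.single_mul_single, DFinsupp.single_eq_same]
      · rw [S.single_mul_single_of_ne _ _ hk,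
          DFinsupp.single_eq_of_ne fun h => hk (congrArg Prod.snd h).symm, S.mul_zero',
          S.zero_mul', DFinsupp.single_zero]
    · rw [S.single_mul_single_of_ne _ _ hj, zero_mul,
        DFinsupp.single_eq_of_ne fun h => hj (congrArg Prod.fst h), S.mul_zero', S.zero_mul',
        DFinsupp.single_zero]

end GammaSystem

/-- **Proposition 3.2.** If the generalized matrix ring `A` is prime, then for
all `i, j ∈ I` the `A_{ji}`-ring `A_{ij}` is prime: for all ideals `B, C` of
the `A_{ji}`-ring `A_{ij}`, `B·A_{ji}·C = 0` implies `B = 0` or `C = 0`. -/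
theorem gammaRing_prime_of_gmRing_prime {I : Type u}
    (S : GammaSystem.{u, v} I) (hA : IsPrimeRing (GMRing S)) :
    ∀ (i j : I) (B C : GammaIdeal S i j),
      (∀ b ∈ B.carrier, ∀ u : S.A j i, ∀ c ∈ C.carrier,
        S.mul (S.mul b u) c = 0) →
      B.carrier = ⊥ ∨ C.carrier = ⊥ := by
  classical
  intro i j B C hBC
  simp only [AddSubgroup.eq_bot_iff_forall]
  by_contra! hne
  obtain ⟨⟨b, hb, hb0⟩, c, hc, hc0⟩ := hne
  have hsandwich : ∀ z : GMRing S,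
      DFinsupp.single (i, j) b * z * DFinsupp.single (i, j) c = 0 := fun z => by
    rw [S.single_mul_mul_single, hBC b hb _ c hc, DFinsupp.single_zero]
  rcases hA.eq_zero_or_eq_zero_of_forall_mul_mul_eq_zero hsandwich with h | h
  · exact hb0 (by simpa using h)
  · exact hc0 (by simpa using h)
end

section
/- Let r be a radical property of rings. Define a property g.m.r of g.m.rings by: a g.m.ring A is a g.m.r-g.m.ring if and only if the ring A is an r-ring. Then g.m.r is a radical property of g.m.rings, and for every g.m.ring A, the g.m.r-radical g.m.r(A) is the largest g.m.ideal N of A such that the ring N is an r-ring. -/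
/-!
Generalized matrix rings (g.m.rings) of a `Γ_I`-system, their g.m.ideals,
g.m.homomorphisms, quotients, and the general theory of radicals,
following Zhang, "The Baer radical of generalized matrix rings".
-/

universe u v w

set_option autoImplicit false
set_option maxHeartbeats 1000000

variable {I : Type u}

/-!
A g.m.homomorphism induces a homomorphism of the underlying rings, surjective when the
g.m.homomorphism is, so `g.m.r` inherits closure under homomorphic images from `r`. A g.m.ideal
`N` of `A` determines the two-sided ideal of `A` of matrices with entries in `N`, and the ring `N`
maps onto it.

The radical `g.m.r(A)` is the componentwise sum `N` of all g.m.ideals whose ring is an `r`-ring.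
Each of them is an `r`-ideal of the ring `N`, so the largest `r`-ideal of `N` contains every
single-entry matrix of `N`; hence it is all of `N` and `N` is an `r`-ring. If `P` is an
`r`-g.m.ideal of `A//N` with preimage `Q` in `A`, the ring `Q` maps onto the `r`-ring `P` with
kernel inside the `r`-ideal `N`; radical classes are closed under extensions, so `Q` is an
`r`-ring, `Q ≤ N`, and `P = 0`.
-/

section RingRadicals

variable {r : ∀ (R : Type w) [NonUnitalRing R], Prop} {R S T : Type w}
  [NonUnitalRing R] [NonUnitalRing S] [NonUnitalRing T]

def IsHomomorphicallyClosed (r : ∀ (R : Type w) [NonUnitalRing R], Prop) : Prop :=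
  ∀ (R S : Type w) [NonUnitalRing R] [NonUnitalRing S] (f : R →ₙ+* S),
    Function.Surjective f → r R → r S

lemma IsHomomorphicallyClosed.of_forall_mem (hr : IsHomomorphicallyClosed r)
    {B : TwoSidedIdeal R} (hB : r B) (hmem : ∀ x, x ∈ B) : r R :=
  hr _ _ (NonUnitalSubringClass.subtype B) (fun x => ⟨⟨x, hmem x⟩, rfl⟩) hB

lemma IsHomomorphicallyClosed.top (hr : IsHomomorphicallyClosed r) (hR : r R) :
    r (⊤ : TwoSidedIdeal R) :=
  hr _ _ (NonUnitalRingHom.codRestrict (NonUnitalRingHom.id R) ⊤ fun _ =>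
    TwoSidedIdeal.mem_top _) (fun x => ⟨x, rfl⟩) hR

/-- The quotient map (`RingCon.mk'` needs a unital ring). -/
def TwoSidedIdeal.mkₙ (B : TwoSidedIdeal R) : R →ₙ+* B.ringCon.Quotient where
  toFun x := x
  map_mul' _ _ := rfl
  map_zero' := rfl
  map_add' _ _ := rfl

lemma TwoSidedIdeal.ker_mkₙ (B : TwoSidedIdeal R) : TwoSidedIdeal.ker B.mkₙ = B := by
  ext x
  rw [TwoSidedIdeal.mem_ker, TwoSidedIdeal.mem_iff, ← B.ringCon.eq]
  rfl

lemma NonUnitalRingHom.eq_of_ker_le {f : R →ₙ+* S} {g : R →ₙ+* T}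
    (hfg : TwoSidedIdeal.ker f ≤ TwoSidedIdeal.ker g) {a b : R} (hab : f a = f b) :
    g a = g b := by
  rw [← sub_eq_zero, ← map_sub]
  exact (TwoSidedIdeal.mem_ker g).mp (hfg ((TwoSidedIdeal.mem_ker f).mpr (by simp [hab])))

noncomputable def NonUnitalRingHom.liftOfSurjective (f : R →ₙ+* S)
    (hf : Function.Surjective f) (g : R →ₙ+* T)
    (hfg : TwoSidedIdeal.ker f ≤ TwoSidedIdeal.ker g) : S →ₙ+* T where
  toFun s := g (Function.surjInv hf s)
  map_mul' _ _ := (eq_of_ker_le hfg (by simp [Function.surjInv_eq hf])).trans (map_mul g _ _)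
  map_zero' := (eq_of_ker_le (b := 0) hfg (by simp [Function.surjInv_eq hf])).trans (map_zero g)
  map_add' _ _ := (eq_of_ker_le hfg (by simp [Function.surjInv_eq hf])).trans (map_add g _ _)

lemma NonUnitalRingHom.liftOfSurjective_apply (f : R →ₙ+* S) (hf : Function.Surjective f)
    (g : R →ₙ+* T) (hfg : TwoSidedIdeal.ker f ≤ TwoSidedIdeal.ker g) (x : R) :
    f.liftOfSurjective hf g hfg (f x) = g x :=
  eq_of_ker_le hfg (Function.surjInv_eq hf (f x))

theorem IsRingRadicalProperty.of_surjective_of_ker_le (hr : IsRingRadicalProperty r)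
    (f : R →ₙ+* S) (hf : Function.Surjective f) (hS : r S) (J : TwoSidedIdeal R) (hJ : r J)
    (hker : TwoSidedIdeal.ker f ≤ J) : r R := by
  obtain ⟨B, hB, hmax, hsemisimple⟩ := hr.2 R
  have hfB : TwoSidedIdeal.ker f ≤ TwoSidedIdeal.ker B.mkₙ := by
    rw [B.ker_mkₙ]
    exact hker.trans (hmax J hJ)
  have hquot : r B.ringCon.Quotient := by
    refine hr.1 _ _ (f.liftOfSurjective hf B.mkₙ hfB) (fun q => ?_) hS
    obtain ⟨x, rfl⟩ := Quotient.mk''_surjective q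
    exact ⟨f x, f.liftOfSurjective_apply hf _ hfB x⟩
  have htop := hsemisimple ⊤ (IsHomomorphicallyClosed.top hr.1 hquot)
  refine IsHomomorphicallyClosed.of_forall_mem hr.1 hB fun x => ?_
  rw [← B.ker_mkₙ, TwoSidedIdeal.mem_ker, ← TwoSidedIdeal.mem_bot, ← htop]
  exact TwoSidedIdeal.mem_top _

end RingRadicals

namespace GammaSystem

variable (S : GammaSystem I)

lemma mul_def (x y : GMRing S) : x * y = S.gmul x y := rfl

open Classical in
lemma map_mul_of_map_mul_single {R : Type*} [NonUnitalNonAssocSemiring R] (F : GMRing S →+ R)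
    (hF : ∀ (p q : I × I) (a : S.A p.1 p.2) (b : S.A q.1 q.2),
      F (DFinsupp.single p a * DFinsupp.single q b) =
        F (DFinsupp.single p a) * F (DFinsupp.single q b))
    (x y : GMRing S) : F (x * y) = F x * F y := by
  have single_mul : ∀ p (a : S.A p.1 p.2) y,
      F (DFinsupp.single p a * y) = F (DFinsupp.single p a) * F y := by
    intro p a y
    induction y using DFinsupp.induction with
    | h0 => simp
    | ha q b y _ _ ih => rw [_root_.mul_add, map_add, map_add, hF, ih, _root_.mul_add]
  induction x using DFinsupp.induction with
  | h0 => simp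
  | ha p a x _ _ ih => rw [_root_.add_mul, map_add, map_add, single_mul, ih, _root_.add_mul]

end GammaSystem

namespace GMHom

variable {S T : GammaSystem I} (ψ : GMHom S T)

def toAddMonoidHom (i j : I) : S.A i j →+ T.A i j := AddMonoidHom.mk' (ψ.f i j) ψ.map_add

lemma map_zero {i j : I} : ψ.f i j 0 = 0 := (ψ.toAddMonoidHom i j).map_zero

noncomputable def toRingHom : GMRing S →ₙ+* GMRing T where
  toFun := DFinsupp.mapRange.addMonoidHom fun p => ψ.toAddMonoidHom p.1 p.2
  map_zero' := _root_.map_zero _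
  map_add' := _root_.map_add _
  map_mul' := S.map_mul_of_map_mul_single _ <| by
    rintro ⟨i, j⟩ ⟨j', k⟩ a b
    simp only [S.mul_def, T.mul_def, S.gmul_single_single, T.gmul_single_single,
      DFinsupp.mapRange.addMonoidHom_apply, DFinsupp.mapRange_single]
    by_cases h : j = j'
    · subst h
      simp [toAddMonoidHom, ψ.map_mul]
    · simp [h]

lemma toRingHom_apply (x : GMRing S) (p : I × I) : ψ.toRingHom x p = ψ.f p.1 p.2 (x p) :=
  rfl

lemma mem_ker_toRingHom {x : GMRing S} :
    x ∈ TwoSidedIdeal.ker ψ.toRingHom ↔ ∀ p : I × I, ψ.f p.1 p.2 (x p) = 0 := by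
  rw [TwoSidedIdeal.mem_ker, DFinsupp.ext_iff]
  rfl

lemma exists_toRingHom_eq {y : GMRing T} (hy : ∀ p : I × I, y p ∈ Set.range (ψ.f p.1 p.2)) :
    ∃ x, ψ.toRingHom x = y := by
  classical
  choose x hx using hy
  refine ⟨DFinsupp.mk y.support fun p => x p.1, DFinsupp.ext fun p => ?_⟩
  by_cases hp : p ∈ y.support
  · simp [toRingHom_apply, hp, hx]
  · simp [toRingHom_apply, hp, DFinsupp.notMem_support_iff.mp hp, ψ.map_zero]

lemma toRingHom_surjective (hψ : ψ.Surjective) : Function.Surjective ψ.toRingHom :=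
  fun y => ψ.exists_toRingHom_eq fun p => hψ p.1 p.2 (y p)

end GMHom

namespace GMIdeal

variable {S : GammaSystem I}

def subtype (N : GMIdeal S) : GMHom N.toSystem S where
  f _ _ a := a.1
  map_add _ _ := rfl
  map_mul _ _ := rfl

def inclusion {M N : GMIdeal S} (h : ∀ i j, M.B i j ≤ N.B i j) :
    GMHom M.toSystem N.toSystem where
  f i j a := ⟨a.1, h i j a.2⟩
  map_add _ _ := rfl
  map_mul _ _ := rfl

def mkQ (N : GMIdeal S) : GMHom S N.quotSystem where
  f i j a := (a : S.A i j ⧸ N.B i j)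
  map_add _ _ := rfl
  map_mul _ _ := rfl

lemma mkQ_surjective (N : GMIdeal S) : N.mkQ.Surjective :=
  fun _ _ => QuotientAddGroup.mk_surjective

def comap {T : GammaSystem I} (ψ : GMHom S T) (P : GMIdeal T) : GMIdeal S where
  B i j := (P.B i j).comap (ψ.toAddMonoidHom i j)
  mul_mem_right x z hx := show ψ.f _ _ (S.mul x z) ∈ P.B _ _ by
    rw [ψ.map_mul]; exact P.mul_mem_right _ _ hx
  mul_mem_left x z hz := show ψ.f _ _ (S.mul x z) ∈ P.B _ _ by
    rw [ψ.map_mul]; exact P.mul_mem_left _ _ hz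

def iSup {κ : Sort*} (M : κ → GMIdeal S) : GMIdeal S where
  B i j := ⨆ l, (M l).B i j
  mul_mem_right {i j k} x z hx := by
    induction hx using AddSubgroup.iSup_induction' with
    | hp l x hx => exact AddSubgroup.mem_iSup_of_mem l ((M l).mul_mem_right x z hx)
    | h1 => rw [S.zero_mul']; exact zero_mem _
    | hadd x y _ _ hx hy => rw [S.add_mul]; exact add_mem hx hy
  mul_mem_left {i j k} x z hz := by
    induction hz using AddSubgroup.iSup_induction' with
    | hp l z hz => exact AddSubgroup.mem_iSup_of_mem l ((M l).mul_mem_left x z hz)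
    | h1 => rw [S.mul_zero']; exact zero_mem _
    | hadd y z _ _ hy hz => rw [S.mul_add]; exact add_mem hy hz

/-- The matrices with entries in `N`, presented as a kernel so that it is a two-sided ideal
for free. -/
noncomputable def toTwoSidedIdeal (N : GMIdeal S) : TwoSidedIdeal (GMRing S) :=
  TwoSidedIdeal.ker N.mkQ.toRingHom

lemma mem_toTwoSidedIdeal {N : GMIdeal S} {x : GMRing S} :
    x ∈ N.toTwoSidedIdeal ↔ ∀ p : I × I, x p ∈ N.B p.1 p.2 := by
  simp only [toTwoSidedIdeal, GMHom.mem_ker_toRingHom]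
  exact forall_congr' fun p => QuotientAddGroup.eq_zero_iff _

open Classical in
lemma single_mem_toTwoSidedIdeal {N : GMIdeal S} {p : I × I} {a : S.A p.1 p.2}
    (ha : a ∈ N.B p.1 p.2) : DFinsupp.single p a ∈ N.toTwoSidedIdeal :=
  mem_toTwoSidedIdeal.mpr fun q => by
    rw [DFinsupp.single_apply]
    split_ifs with h
    · subst h; exact ha
    · exact zero_mem _

lemma r_toTwoSidedIdeal_comap_subtype {r : ∀ (R : Type (max u v)) [NonUnitalRing R], Prop}
    (hr : IsHomomorphicallyClosed r) {S : GammaSystem.{u, v} I} {M N : GMIdeal S}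
    (h : ∀ i j, M.B i j ≤ N.B i j) (hM : r (GMRing M.toSystem)) :
    r (M.comap N.subtype).toTwoSidedIdeal := by
  refine hr _ _ (NonUnitalRingHom.codRestrict (inclusion h).toRingHom _ fun x =>
    mem_toTwoSidedIdeal.mpr fun p => (x p).2) (fun ⟨y, hy⟩ => ?_) hM
  obtain ⟨x, hx⟩ := (inclusion h).exists_toRingHom_eq fun p =>
    ⟨⟨(y p).1, mem_toTwoSidedIdeal.mp hy p⟩, rfl⟩
  exact ⟨x, Subtype.ext hx⟩

end GMIdeal

namespace GMHom

variable {S T : GammaSystem I}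

def restrict (ψ : GMHom S T) (P : GMIdeal T) : GMHom (P.comap ψ).toSystem P.toSystem where
  f i j a := ⟨ψ.f i j a.1, a.2⟩
  map_add x y := Subtype.ext (ψ.map_add x.1 y.1)
  map_mul x z := Subtype.ext (ψ.map_mul x.1 z.1)

lemma restrict_surjective {ψ : GMHom S T} (hψ : ψ.Surjective) (P : GMIdeal T) :
    (ψ.restrict P).Surjective := fun i j y => by
  obtain ⟨x, hx⟩ := hψ i j y.1
  exact ⟨⟨x, show ψ.f i j x ∈ P.B i j from hx ▸ y.2⟩, Subtype.ext hx⟩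

end GMHom

section GMRadical

variable (r : ∀ (R : Type (max u v)) [NonUnitalRing R], Prop)

noncomputable def gmRadical (S : GammaSystem.{u, v} I) : GMIdeal S :=
  GMIdeal.iSup fun M : {M : GMIdeal S // r (GMRing M.toSystem)} => M.1

variable {r}

lemma le_gmRadical {S : GammaSystem.{u, v} I} {M : GMIdeal S} (hM : r (GMRing M.toSystem))
    (i j : I) : M.B i j ≤ (gmRadical r S).B i j :=
  le_iSup (fun M : {M : GMIdeal S // r (GMRing M.toSystem)} => M.1.B i j) ⟨M, hM⟩

open Classical in
lemma r_gmRadical (hr : IsRingRadicalProperty r) (S : GammaSystem.{u, v} I) :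
    r (GMRing (gmRadical r S).toSystem) := by
  obtain ⟨B, hB, hmax, -⟩ := hr.2 (GMRing (gmRadical r S).toSystem)
  have single_mem : ∀ p (a : (gmRadical r S).toSystem.A p.1 p.2), DFinsupp.single p a ∈ B := by
    rintro p ⟨a, ha⟩
    induction ha using AddSubgroup.iSup_induction' with
    | hp M a haM =>
      exact hmax _ (GMIdeal.r_toTwoSidedIdeal_comap_subtype hr.1 (le_gmRadical M.2) M.2)
        (GMIdeal.single_mem_toTwoSidedIdeal haM)
    | h1 => convert B.zero_mem; exact DFinsupp.single_zero p
    | hadd a b ha' hb' ha hb =>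
      convert B.add_mem ha hb
      exact DFinsupp.single_add (β := fun q : I × I => (gmRadical r S).toSystem.A q.1 q.2) p
        ⟨a, ha'⟩ ⟨b, hb'⟩
  refine IsHomomorphicallyClosed.of_forall_mem hr.1 hB fun t => ?_
  induction t using DFinsupp.induction with
  | h0 => exact B.zero_mem
  | ha p a t _ _ ht => exact B.add_mem (single_mem p a) ht

lemma isLargestRadicalIdeal_gmRadical (hr : IsRingRadicalProperty r)
    (S : GammaSystem.{u, v} I) :
    IsLargestRadicalIdeal (fun _ S => r (GMRing S)) S (gmRadical r S) :=
  ⟨r_gmRadical hr S, fun _ hM => le_gmRadical hM⟩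

lemma gmSemisimple_quotSystem_gmRadical (hr : IsRingRadicalProperty r)
    (S : GammaSystem.{u, v} I) :
    GMSemisimple (fun _ S => r (GMRing S)) (gmRadical r S).quotSystem := by
  intro P hP
  let N := gmRadical r S
  let Q := P.comap N.mkQ
  have hNQ : ∀ i j, N.B i j ≤ Q.B i j := fun i j a ha => by
    show N.mkQ.f i j a ∈ P.B i j
    rw [show N.mkQ.f i j a = 0 from (QuotientAddGroup.eq_zero_iff a).mpr ha]
    exact zero_mem _
  have hker : TwoSidedIdeal.ker (N.mkQ.restrict P).toRingHom ≤
      (N.comap Q.subtype).toTwoSidedIdeal := fun t ht =>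
    GMIdeal.mem_toTwoSidedIdeal.mpr fun p => (QuotientAddGroup.eq_zero_iff (t p).1).mp
      (congrArg Subtype.val ((N.mkQ.restrict P).mem_ker_toRingHom.mp ht p))
  have hQ : r (GMRing Q.toSystem) :=
    hr.of_surjective_of_ker_le _
      ((N.mkQ.restrict P).toRingHom_surjective (GMHom.restrict_surjective N.mkQ_surjective P))
      hP _ (GMIdeal.r_toTwoSidedIdeal_comap_subtype hr.1 hNQ (r_gmRadical hr S)) hker
  intro i j
  refine (AddSubgroup.eq_bot_iff_forall _).mpr fun c hc => ?_
  obtain ⟨a, rfl⟩ := N.mkQ_surjective i j c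
  exact (QuotientAddGroup.eq_zero_iff a).mpr (le_gmRadical hQ i j hc)

end GMRadical

/-- **Theorem 2.4.** Let `r` be a radical property of rings, and call a
g.m.ring `A` a `g.m.r`-g.m.ring iff the ring `A` is an `r`-ring. Then `g.m.r`
is a radical property of g.m.rings, and `g.m.r(A)` is the largest g.m.ideal
`N` of `A` such that the ring `N` is an `r`-ring. -/
theorem gmRadicalProperty_of_ringRadicalProperty
    (r : ∀ (R : Type (max u v)) [NonUnitalRing R], Prop)
    (hr : IsRingRadicalProperty r) :
    IsGMRadicalProperty (fun (I₀ : Type u) (S : GammaSystem.{u, v} I₀) =>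
      r (GMRing S)) ∧
    ∀ (I : Type u) (S : GammaSystem.{u, v} I), ∃ N : GMIdeal S,
      r (GMRing N.toSystem) ∧
      ∀ M : GMIdeal S, r (GMRing M.toSystem) → ∀ i j : I, M.B i j ≤ N.B i j :=
  ⟨⟨fun _ _ _ ψ hψ hS => hr.1 _ _ ψ.toRingHom (ψ.toRingHom_surjective hψ) hS,
    fun _ S => ⟨gmRadical r S, isLargestRadicalIdeal_gmRadical hr S,
      gmSemisimple_quotSystem_gmRadical hr S⟩⟩,
    fun _ S => ⟨gmRadical r S, isLargestRadicalIdeal_gmRadical hr S⟩⟩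
end

section
/- Let r be a radical property of g.m.rings. A g.m.ring A is an r-g.m.ring if and only if A cannot be g.m.homomorphically mapped onto a non-zero r-semisimple g.m.ring. -/
/-!
Generalized matrix rings (g.m.rings) of a `Γ_I`-system, their g.m.ideals,
g.m.homomorphisms, quotients, and the general theory of radicals,
following Zhang, "The Baer radical of generalized matrix rings".
-/

universe u v w

set_option autoImplicit false
set_option maxHeartbeats 1000000

variable {I : Type u}

/-!
If `A` is an `r`-g.m.ring, so is every g.m.homomorphic image `T` (R1); then `T` is an
`r`-g.m.ideal of itself, so it vanishes when it is `r`-semisimple. Conversely, `A//r(A)` is an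
`r`-semisimple image of `A` (R3); if it is zero then `r(A) = A`, which is an `r`-g.m.ring.
-/

namespace GMHom

variable {S T U : GammaSystem I}

def comp (φ : GMHom T U) (ψ : GMHom S T) : GMHom S U where
  f i j x := φ.f i j (ψ.f i j x)
  map_add x y := by rw [ψ.map_add, φ.map_add]
  map_mul x z := by rw [ψ.map_mul, φ.map_mul]

theorem Surjective.comp {φ : GMHom T U} {ψ : GMHom S T} (hφ : φ.Surjective)
    (hψ : ψ.Surjective) : (φ.comp ψ).Surjective :=
  fun i j => (hφ i j).comp (hψ i j)

end GMHom

namespace GMIdeal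

def top (S : GammaSystem I) : GMIdeal S where
  B _ _ := ⊤
  mul_mem_right _ _ _ := AddSubgroup.mem_top _
  mul_mem_left _ _ _ := AddSubgroup.mem_top _

theorem isZero_top_iff (S : GammaSystem I) : (top S).IsZero ↔ S.IsZero := by
  refine ⟨fun h i j x => ?_, fun h i j => ?_⟩
  · have hx : x ∈ (top S).B i j := AddSubgroup.mem_top x
    rw [h i j] at hx
    exact AddSubgroup.mem_bot.mp hx
  · exact (AddSubgroup.eq_bot_iff_forall _).mpr fun x _ => h i j x

def toTop (S : GammaSystem I) : GMHom S (top S).toSystem where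
  f _ _ x := ⟨x, AddSubgroup.mem_top x⟩
  map_add _ _ := rfl
  map_mul _ _ := rfl

theorem toTop_surjective (S : GammaSystem I) : (toTop S).Surjective :=
  fun _ _ x => ⟨x.1, rfl⟩

variable {S : GammaSystem I} (N : GMIdeal S)

def subtypeHom : GMHom N.toSystem S where
  f _ _ x := x.1
  map_add _ _ := rfl
  map_mul _ _ := rfl

def mkHom : GMHom S N.quotSystem where
  f _ _ x := QuotientAddGroup.mk x
  map_add _ _ := rfl
  map_mul _ _ := rfl

theorem mkHom_surjective : N.mkHom.Surjective :=
  fun _ _ => QuotientAddGroup.mk_surjective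

theorem subtypeHom_surjective_of_isZero_quotSystem (hN : N.quotSystem.IsZero) :
    N.subtypeHom.Surjective :=
  fun i j x =>
    ⟨⟨x, (QuotientAddGroup.eq_zero_iff x).mp (hN i j (x : S.A i j ⧸ N.B i j))⟩, rfl⟩

end GMIdeal

namespace IsGMRadicalProperty

variable {r : ∀ I₀ : Type u, GammaSystem.{u, v} I₀ → Prop} {S T : GammaSystem.{u, v} I}

theorem isZero_of_surjective_of_semisimple (hr : IsGMRadicalProperty r) (hS : r I S)
    {ψ : GMHom S T} (hψ : ψ.Surjective) (hT : GMSemisimple r T) : T.IsZero :=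
  (GMIdeal.isZero_top_iff T).mp <|
    hT _ (hr.1 I S _ _ ((GMIdeal.toTop_surjective T).comp hψ) hS)

theorem of_isZero_quotSystem (hr : IsGMRadicalProperty r) {N : GMIdeal S}
    (hN : r I N.toSystem) (hquot : N.quotSystem.IsZero) : r I S :=
  hr.1 I _ S N.subtypeHom (N.subtypeHom_surjective_of_isZero_quotSystem hquot) hN

end IsGMRadicalProperty

/-- **Proposition 2.1.** Let `r` be a radical property of g.m.rings. A g.m.ring
`A` is an `r`-g.m.ring iff `A` cannot be g.m.homomorphically mapped onto a
non-zero `r`-semisimple g.m.ring. -/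
theorem r_iff_not_mapsOnto_semisimple
    (r : ∀ I₀ : Type u, GammaSystem.{u, v} I₀ → Prop)
    (hr : IsGMRadicalProperty r) {I : Type u} (S : GammaSystem.{u, v} I) :
    r I S ↔ ∀ (T : GammaSystem.{u, v} I) (ψ : GMHom S T),
      ψ.Surjective → GMSemisimple r T → T.IsZero := by
  refine ⟨fun hS T ψ hψ hT => hr.isZero_of_surjective_of_semisimple hS hψ hT, fun h => ?_⟩
  obtain ⟨N, ⟨hrN, -⟩, hquot⟩ := hr.2 I S
  exact hr.of_isZero_quotSystem hrN (h _ N.mkHom N.mkHom_surjective hquot)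
end
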